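/- arXiv:2201.00413 — 5 statements merged into one kernel-verified Lean document; each statement's English description precedes it below -/
import Mathlib

section
/- (Submodularity of the K-perimeter) Let K be a suitable convolution kernel on ℝ^d and A, B ⊆ ℝ^d measurable sets. Then P_K(A ∩ B) + P_K(A ∪ B) ≤ P_K(A) + P_K(B), where all quantities are values in [0,∞]. -/
open MeasureTheory
open scoped ENNReal

/-- The convolution of a kernel `K` with the indicator function of a set `E`. -/
noncomputable def conv {d : ℕ} (K : EuclideanSpace ℝ (Fin d) → ℝ)
    (E : Set (EuclideanSpace ℝ (Fin d))) (x : EuclideanSpace ℝ (Fin d)) : ℝ :=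
  ∫ y, K (x - y) * E.indicator (fun _ => (1 : ℝ)) y

/-- The `K`-perimeter `P_K(D) = ∫_{Dᶜ} K ∗ χ_D`, as a value in `[0,∞]`. -/
noncomputable def PK {d : ℕ} (K : EuclideanSpace ℝ (Fin d) → ℝ)
    (D : Set (EuclideanSpace ℝ (Fin d))) : ℝ≥0∞ :=
  ∫⁻ x in Dᶜ, ENNReal.ofReal (conv K D x)

section Aux

variable {d : ℕ} {K : EuclideanSpace ℝ (Fin d) → ℝ}

lemma conv_integrand_integrable (hK0 : ∀ x, 0 ≤ K x) (hKint : Integrable K)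
    (E : Set (EuclideanSpace ℝ (Fin d))) (hE : MeasurableSet E)
    (x : EuclideanSpace ℝ (Fin d)) :
    Integrable (fun y => K (x - y) * E.indicator (fun _ => (1 : ℝ)) y) := by
  have hKx : Integrable (fun y => K (x - y)) :=
    (integrable_comp_sub_left K x).2 hKint
  refine hKx.mono' ?_ ?_
  · exact hKx.aestronglyMeasurable.mul
      ((measurable_const.indicator hE).aestronglyMeasurable)
  · filter_upwards with y
    rw [Real.norm_eq_abs, abs_mul, abs_of_nonneg (hK0 _)]
    have h1 : E.indicator (fun _ => (1 : ℝ)) y ≤ 1 := by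
      by_cases hy : y ∈ E <;> simp [Set.indicator_apply, hy]
    have h0 : 0 ≤ E.indicator (fun _ => (1 : ℝ)) y := by
      by_cases hy : y ∈ E <;> simp [Set.indicator_apply, hy]
    calc K (x - y) * |E.indicator (fun _ => (1 : ℝ)) y|
        = K (x - y) * E.indicator (fun _ => (1 : ℝ)) y := by rw [abs_of_nonneg h0]
      _ ≤ K (x - y) * 1 := mul_le_mul_of_nonneg_left h1 (hK0 _)
      _ = K (x - y) := mul_one _

lemma conv_nonneg (hK0 : ∀ x, 0 ≤ K x) (E : Set (EuclideanSpace ℝ (Fin d)))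
    (x : EuclideanSpace ℝ (Fin d)) : 0 ≤ conv K E x := by
  refine integral_nonneg fun y => ?_
  have h0 : 0 ≤ E.indicator (fun _ => (1 : ℝ)) y := by
    by_cases hy : y ∈ E <;> simp [Set.indicator_apply, hy]
  exact mul_nonneg (hK0 _) h0

lemma conv_mono (hK0 : ∀ x, 0 ≤ K x) (hKint : Integrable K)
    {E F : Set (EuclideanSpace ℝ (Fin d))} (hE : MeasurableSet E) (hF : MeasurableSet F)
    (hEF : E ⊆ F) (x : EuclideanSpace ℝ (Fin d)) : conv K E x ≤ conv K F x := by
  refine integral_mono (conv_integrand_integrable hK0 hKint E hE x)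
    (conv_integrand_integrable hK0 hKint F hF x) fun y => ?_
  refine mul_le_mul_of_nonneg_left ?_ (hK0 _)
  by_cases hy : y ∈ E
  · simp [Set.indicator_apply, hy, hEF hy]
  · by_cases hy' : y ∈ F <;> simp [Set.indicator_apply, hy, hy']

lemma conv_add (hK0 : ∀ x, 0 ≤ K x) (hKint : Integrable K)
    {A B : Set (EuclideanSpace ℝ (Fin d))} (hA : MeasurableSet A) (hB : MeasurableSet B)
    (x : EuclideanSpace ℝ (Fin d)) :
    conv K (A ∩ B) x + conv K (A ∪ B) x = conv K A x + conv K B x := by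
  unfold conv
  rw [← integral_add (conv_integrand_integrable hK0 hKint _ (hA.inter hB) x)
      (conv_integrand_integrable hK0 hKint _ (hA.union hB) x),
    ← integral_add (conv_integrand_integrable hK0 hKint _ hA x)
      (conv_integrand_integrable hK0 hKint _ hB x)]
  refine integral_congr_ae (Filter.Eventually.of_forall fun y => ?_)
  by_cases hy : y ∈ A <;> by_cases hy' : y ∈ B <;>
    simp [Set.indicator_apply, hy, hy']

lemma conv_aemeasurable (hKint : Integrable K)
    (E : Set (EuclideanSpace ℝ (Fin d))) (hE : MeasurableSet E) :
    AEStronglyMeasurable (fun x => conv K E x) volume := by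
  have h1 : AEStronglyMeasurable (fun p : EuclideanSpace ℝ (Fin d) × EuclideanSpace ℝ (Fin d) =>
      K (p.1 - p.2)) (volume.prod volume) := by
    have := (measurePreserving_sub_prod (volume : Measure (EuclideanSpace ℝ (Fin d))) volume)
    exact hKint.aestronglyMeasurable.comp_quasiMeasurePreserving
      (Measure.quasiMeasurePreserving_fst.comp this.quasiMeasurePreserving)
  have h2 : AEStronglyMeasurable (fun p : EuclideanSpace ℝ (Fin d) × EuclideanSpace ℝ (Fin d) =>
      K (p.1 - p.2) * E.indicator (fun _ => (1 : ℝ)) p.2) (volume.prod volume) :=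
    h1.mul (((measurable_const.indicator hE).comp measurable_snd).aestronglyMeasurable)
  exact h2.integral_prod_right'

end Aux

/-- Submodularity of the `K`-perimeter:
    `P_K(A ∩ B) + P_K(A ∪ B) ≤ P_K(A) + P_K(B)` in `[0,∞]`. -/
theorem PK_submodular
    {d : ℕ} (K : EuclideanSpace ℝ (Fin d) → ℝ)
    (hK0 : ∀ x, 0 ≤ K x) (hKeven : ∀ x, K (-x) = K x)
    (hKint : Integrable K) (hK1 : ∫ x, K x = 1)
    (A B : Set (EuclideanSpace ℝ (Fin d)))
    (hA : MeasurableSet A) (hB : MeasurableSet B) :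
    PK K (A ∩ B) + PK K (A ∪ B) ≤ PK K A + PK K B := by
  set fI := fun x => ENNReal.ofReal (conv K (A ∩ B) x) with hfI
  set fU := fun x => ENNReal.ofReal (conv K (A ∪ B) x) with hfU
  set fA := fun x => ENNReal.ofReal (conv K A x) with hfA
  set fB := fun x => ENNReal.ofReal (conv K B x) with hfB
  have hrw : ∀ (D : Set (EuclideanSpace ℝ (Fin d))) (hD : MeasurableSet D)
      (f : EuclideanSpace ℝ (Fin d) → ℝ≥0∞),
      ∫⁻ x in Dᶜ, f x = ∫⁻ x, Dᶜ.indicator f x := by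
    intro D hD f
    rw [lintegral_indicator hD.compl]
  have key : ∀ x, (A ∩ B)ᶜ.indicator fI x + (A ∪ B)ᶜ.indicator fU x ≤
      Aᶜ.indicator fA x + Bᶜ.indicator fB x := by
    intro x
    by_cases hxA : x ∈ A <;> by_cases hxB : x ∈ B
    · have e1 : x ∉ (A ∩ B)ᶜ := fun h => h ⟨hxA, hxB⟩
      have e2 : x ∉ (A ∪ B)ᶜ := fun h => h (Or.inl hxA)
      rw [Set.indicator_of_notMem e1, Set.indicator_of_notMem e2]
      simp
    · have e1 : x ∈ (A ∩ B)ᶜ := fun h => hxB h.2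
      have e2 : x ∉ (A ∪ B)ᶜ := fun h => h (Or.inl hxA)
      have e3 : x ∉ Aᶜ := fun h => h hxA
      have e4 : x ∈ Bᶜ := hxB
      rw [Set.indicator_of_mem e1, Set.indicator_of_notMem e2,
        Set.indicator_of_notMem e3, Set.indicator_of_mem e4]
      simpa using ENNReal.ofReal_le_ofReal
        (conv_mono hK0 hKint (hA.inter hB) hB Set.inter_subset_right x)
    · have e1 : x ∈ (A ∩ B)ᶜ := fun h => hxA h.1
      have e2 : x ∉ (A ∪ B)ᶜ := fun h => h (Or.inr hxB)
      have e3 : x ∈ Aᶜ := hxA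
      have e4 : x ∉ Bᶜ := fun h => h hxB
      rw [Set.indicator_of_mem e1, Set.indicator_of_notMem e2,
        Set.indicator_of_mem e3, Set.indicator_of_notMem e4]
      simpa using ENNReal.ofReal_le_ofReal
        (conv_mono hK0 hKint (hA.inter hB) hA Set.inter_subset_left x)
    · have e1 : x ∈ (A ∩ B)ᶜ := fun h => hxA h.1
      have e2 : x ∈ (A ∪ B)ᶜ := fun h => h.elim hxA hxB
      have e3 : x ∈ Aᶜ := hxA
      have e4 : x ∈ Bᶜ := hxB
      rw [Set.indicator_of_mem e1, Set.indicator_of_mem e2,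
        Set.indicator_of_mem e3, Set.indicator_of_mem e4, hfI, hfU, hfA, hfB,
        ← ENNReal.ofReal_add (conv_nonneg hK0 _ _) (conv_nonneg hK0 _ _),
        ← ENNReal.ofReal_add (conv_nonneg hK0 _ _) (conv_nonneg hK0 _ _),
        conv_add hK0 hKint hA hB x]
  have hmeasA : AEMeasurable (Aᶜ.indicator fA) volume := by
    refine AEMeasurable.indicator ?_ hA.compl
    exact (ENNReal.measurable_ofReal.comp_aemeasurable
      (conv_aemeasurable hKint A hA).aemeasurable)
  calc PK K (A ∩ B) + PK K (A ∪ B)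
      = (∫⁻ x, (A ∩ B)ᶜ.indicator fI x) + ∫⁻ x, (A ∪ B)ᶜ.indicator fU x := by
        rw [PK, PK, hrw _ (hA.inter hB), hrw _ (hA.union hB)]
    _ ≤ ∫⁻ x, ((A ∩ B)ᶜ.indicator fI x + (A ∪ B)ᶜ.indicator fU x) :=
        le_lintegral_add _ _
    _ ≤ ∫⁻ x, (Aᶜ.indicator fA x + Bᶜ.indicator fB x) := lintegral_mono key
    _ = (∫⁻ x, Aᶜ.indicator fA x) + ∫⁻ x, Bᶜ.indicator fB x :=
        lintegral_add_left' hmeasA _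
    _ = PK K A + PK K B := by rw [PK, PK, hrw _ hA, hrw _ hB]
end

section
/- Let K be a suitable convolution kernel on ℝ^d, let E ⊆ Ω ⊆ ℝ^d be measurable sets with P_K(E) < ∞. Then the following are equivalent: (i) for every measurable F ⊆ Ω one has P_K(E) ≤ P_K(E ∪ F); (ii) for every measurable G ⊆ Ω one has P_K(E ∩ G) ≤ P_K(G). -/
open MeasureTheory
open scoped ENNReal

/-! Writing `φ_D(x) = (K ∗ χ_D)(x) = ∫_D K(x - y) dy`, the map `D ↦ φ_D` is monotone and
modular, and `P_K(D) = ∫_{Dᶜ} φ_D`; a pointwise case analysis then makes `P_K` submodular: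
`P_K(E ∩ G) + P_K(E ∪ G) ≤ P_K(E) + P_K(G)`. Given (i) with `F = G`, cancelling the finite
`P_K(E)` yields (ii); conversely (ii) with `G = E ∪ F` is (i). -/

theorem lintegral_compl_inter_add_union_le {α : Type*} [MeasurableSpace α] {μ : Measure α}
    (φ : Set α → α → ℝ≥0∞) (hmono : Monotone φ) (hmeas : ∀ D, Measurable (φ D))
    {A B : Set α} (hA : MeasurableSet A) (hB : MeasurableSet B)
    (hmod : φ (A ∩ B) + φ (A ∪ B) = φ A + φ B) :
    ∫⁻ x in (A ∩ B)ᶜ, φ (A ∩ B) x ∂μ + ∫⁻ x in (A ∪ B)ᶜ, φ (A ∪ B) x ∂μ ≤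
      ∫⁻ x in Aᶜ, φ A x ∂μ + ∫⁻ x in Bᶜ, φ B x ∂μ := by
  rw [← lintegral_indicator (hA.inter hB).compl, ← lintegral_indicator (hA.union hB).compl,
    ← lintegral_indicator hA.compl, ← lintegral_indicator hB.compl,
    ← lintegral_add_left ((hmeas _).indicator (hA.inter hB).compl),
    ← lintegral_add_left ((hmeas _).indicator hA.compl)]
  refine lintegral_mono fun x => ?_
  by_cases hxA : x ∈ A <;> by_cases hxB : x ∈ B <;>
    simp only [Set.indicator, Set.mem_compl_iff, Set.mem_inter_iff, Set.compl_union, hxA, hxB,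
      and_self, and_true, and_false, not_true_eq_false, not_false_eq_true, ↓reduceIte, add_zero,
      zero_add, le_refl]
  · exact hmono Set.inter_subset_right x
  · exact hmono Set.inter_subset_left x
  · exact (congrFun hmod x).le

section KernelPerimeter

variable {d : ℕ} {K : EuclideanSpace ℝ (Fin d) → ℝ}

noncomputable def lconv (K : EuclideanSpace ℝ (Fin d) → ℝ) (D : Set (EuclideanSpace ℝ (Fin d)))
    (x : EuclideanSpace ℝ (Fin d)) : ℝ≥0∞ :=
  ∫⁻ y in D, ENNReal.ofReal (K (x - y))

theorem ofReal_conv (hK0 : ∀ x, 0 ≤ K x) (hKint : Integrable K)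
    {D : Set (EuclideanSpace ℝ (Fin d))} (hD : MeasurableSet D) (x : EuclideanSpace ℝ (Fin d)) :
    ENNReal.ofReal (conv K D x) = lconv K D x := by
  have hconv : conv K D x = ∫ y in D, K (x - y) := by
    rw [conv, ← integral_indicator hD]
    congr 1 with y
    by_cases hy : y ∈ D <;> simp [hy]
  rw [hconv, ofReal_integral_eq_lintegral_ofReal (hKint.comp_sub_left x).integrableOn
    (ae_of_all _ fun y => hK0 (x - y)), lconv]

theorem PK_eq_setLIntegral_lconv (hK0 : ∀ x, 0 ≤ K x) (hKint : Integrable K)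
    {D : Set (EuclideanSpace ℝ (Fin d))} (hD : MeasurableSet D) :
    PK K D = ∫⁻ x in Dᶜ, lconv K D x := by
  simp only [PK, ofReal_conv hK0 hKint hD]

theorem lconv_mono : Monotone (lconv K) :=
  fun _ _ hAB _ => lintegral_mono_set hAB

theorem lconv_inter_add_union (A : Set (EuclideanSpace ℝ (Fin d)))
    {B : Set (EuclideanSpace ℝ (Fin d))} (hB : MeasurableSet B) :
    lconv K (A ∩ B) + lconv K (A ∪ B) = lconv K A + lconv K B := by
  ext x
  simp only [Pi.add_apply, lconv, ← lintegral_add_measure, add_comm (volume.restrict (A ∩ B)),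
    Measure.restrict_union_add_inter A hB]

theorem lconv_congr_ae {K' : EuclideanSpace ℝ (Fin d) → ℝ} (h : K =ᵐ[volume] K')
    (D : Set (EuclideanSpace ℝ (Fin d))) : lconv K D = lconv K' D := by
  ext x
  have hsub := Measure.measurePreserving_sub_left volume x
  have htrans : (fun y => K (x - y)) =ᵐ[volume] fun y => K' (x - y) :=
    ae_eq_comp hsub.measurable.aemeasurable (by rwa [hsub.map_eq])
  exact lintegral_congr_ae (ae_restrict_of_ae (htrans.fun_comp ENNReal.ofReal))

theorem measurable_lconv (hK : AEMeasurable K) (D : Set (EuclideanSpace ℝ (Fin d))) :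
    Measurable (lconv K D) := by
  rw [lconv_congr_ae hK.ae_eq_mk]
  exact Measurable.lintegral_prod_right'
    (ENNReal.measurable_ofReal.comp (hK.measurable_mk.comp (measurable_fst.sub measurable_snd)))

theorem PK_inter_add_union_le (hK0 : ∀ x, 0 ≤ K x) (hKint : Integrable K)
    {A B : Set (EuclideanSpace ℝ (Fin d))} (hA : MeasurableSet A) (hB : MeasurableSet B) :
    PK K (A ∩ B) + PK K (A ∪ B) ≤ PK K A + PK K B := by
  simp only [PK_eq_setLIntegral_lconv hK0 hKint, hA, hB, hA.inter hB, hA.union hB]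
  exact lintegral_compl_inter_add_union_le (lconv K) lconv_mono
    (measurable_lconv hKint.aemeasurable) hA hB (lconv_inter_add_union A hB)

end KernelPerimeter

theorem outward_minimizing_iff_general
    {d : ℕ} (K : EuclideanSpace ℝ (Fin d) → ℝ)
    (hK0 : ∀ x, 0 ≤ K x)
    (hKint : Integrable K)
    (E Ω : Set (EuclideanSpace ℝ (Fin d)))
    (hE : MeasurableSet E) (hEΩ : E ⊆ Ω)
    (hPE : PK K E < ⊤) :
    (∀ F : Set (EuclideanSpace ℝ (Fin d)), MeasurableSet F → F ⊆ Ω →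
        PK K E ≤ PK K (E ∪ F)) ↔
    (∀ G : Set (EuclideanSpace ℝ (Fin d)), MeasurableSet G → G ⊆ Ω →
        PK K (E ∩ G) ≤ PK K G) := by
  refine ⟨fun hout G hG hGΩ => ?_, fun hinn F hF hFΩ => ?_⟩
  · refine (ENNReal.add_le_add_iff_right hPE.ne).mp ?_
    calc PK K (E ∩ G) + PK K E ≤ PK K (E ∩ G) + PK K (E ∪ G) := by gcongr; exact hout G hG hGΩ
      _ ≤ PK K E + PK K G := PK_inter_add_union_le hK0 hKint hE hG
      _ = PK K G + PK K E := add_comm _ _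
  · simpa [Set.inter_eq_self_of_subset_left Set.subset_union_left] using
      hinn (E ∪ F) (hE.union hF) (Set.union_subset hEΩ hFΩ)

/-- Equivalent formulations of the `K`-outward minimizing condition:
    `P_K(E) ≤ P_K(E ∪ F)` for all measurable `F ⊆ Ω` iff
    `P_K(E ∩ G) ≤ P_K(G)` for all measurable `G ⊆ Ω`. -/
theorem outward_minimizing_iff
    {d : ℕ} (K : EuclideanSpace ℝ (Fin d) → ℝ)
    (hK0 : ∀ x, 0 ≤ K x) (hKeven : ∀ x, K (-x) = K x)
    (hKint : Integrable K) (hK1 : ∫ x, K x = 1)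
    (E Ω : Set (EuclideanSpace ℝ (Fin d)))
    (hE : MeasurableSet E) (hΩ : MeasurableSet Ω) (hEΩ : E ⊆ Ω)
    (hPE : PK K E < ⊤) :
    (∀ F : Set (EuclideanSpace ℝ (Fin d)), MeasurableSet F → F ⊆ Ω →
        PK K E ≤ PK K (E ∪ F)) ↔
    (∀ G : Set (EuclideanSpace ℝ (Fin d)), MeasurableSet G → G ⊆ Ω →
        PK K (E ∩ G) ≤ PK K G) :=
  outward_minimizing_iff_general K hK0 hKint E Ω hE hEΩ hPE
end

section
/- Let K be a suitable convolution kernel on ℝ^d, let Ω ⊆ ℝ^d be a measurable set of finite Lebesgue measure, E ⊆ Ω measurable, and let 𝒜 be a real-valued function on the measurable subsets of Ω. Then the following are equivalent: (i) for every measurable F ⊆ Ω one has P_K(E) + 𝒜(F \ E) ≤ P_K(E ∪ F); (ii) for every measurable G ⊆ Ω one has P_K(E ∩ G) + 𝒜(G \ E) ≤ P_K(G). -/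
open MeasureTheory
open scoped ENNReal

/-- The (real-valued) `K`-perimeter `P_K(D) = ∫_{Dᶜ} K ∗ χ_D`. -/
noncomputable def PKr {d : ℕ} (K : EuclideanSpace ℝ (Fin d) → ℝ)
    (D : Set (EuclideanSpace ℝ (Fin d))) : ℝ :=
  ∫ x in Dᶜ, conv K D x

open Set

namespace OMWFaux

variable {d : ℕ}

noncomputable def J (g : EuclideanSpace ℝ (Fin d) → ℝ≥0∞)
    (A B : Set (EuclideanSpace ℝ (Fin d))) : ℝ≥0∞ :=
  ∫⁻ x in A, ∫⁻ y in B, g (x - y)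

lemma meas_inner (g : EuclideanSpace ℝ (Fin d) → ℝ≥0∞) (hg : Measurable g)
    (B : Set (EuclideanSpace ℝ (Fin d))) :
    Measurable fun x => ∫⁻ y in B, g (x - y) :=
  Measurable.lintegral_prod_right (hg.comp (measurable_fst.sub measurable_snd))

lemma J_swap (g : EuclideanSpace ℝ (Fin d) → ℝ≥0∞) (hg : Measurable g)
    (A B : Set (EuclideanSpace ℝ (Fin d))) :
    J g A B = ∫⁻ y in B, ∫⁻ x in A, g (x - y) :=
  lintegral_lintegral_swap ((hg.comp (measurable_fst.sub measurable_snd)).aemeasurable)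

lemma J_le (g : EuclideanSpace ℝ (Fin d) → ℝ≥0∞) (hg : Measurable g)
    (hg1 : ∫⁻ z, g z = 1) (A B : Set (EuclideanSpace ℝ (Fin d))) :
    J g A B ≤ volume B := by
  rw [J_swap g hg]
  calc ∫⁻ y in B, ∫⁻ x in A, g (x - y)
      ≤ ∫⁻ y in B, 1 := by
        refine lintegral_mono fun y => ?_
        calc ∫⁻ x in A, g (x - y) ≤ ∫⁻ x, g (x - y) :=
              lintegral_mono' Measure.restrict_le_self le_rfl
          _ = 1 := by
              rw [(measurePreserving_sub_right volume y).lintegral_comp hg, hg1]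
    _ = volume B := by simp

lemma J_union_left (g : EuclideanSpace ℝ (Fin d) → ℝ≥0∞)
    {A A' B : Set (EuclideanSpace ℝ (Fin d))} (hA' : MeasurableSet A')
    (hd : Disjoint A A') : J g (A ∪ A') B = J g A B + J g A' B :=
  lintegral_union hA' hd

lemma J_union_right (g : EuclideanSpace ℝ (Fin d) → ℝ≥0∞) (hg : Measurable g)
    {A B B' : Set (EuclideanSpace ℝ (Fin d))} (hB' : MeasurableSet B')
    (hd : Disjoint B B') : J g A (B ∪ B') = J g A B + J g A B' := by
  unfold J
  rw [← lintegral_add_left (meas_inner g hg B)]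
  exact lintegral_congr fun x => lintegral_union hB' hd

lemma submod_core (g : EuclideanSpace ℝ (Fin d) → ℝ≥0∞) (hg : Measurable g)
    (P Q R S : Set (EuclideanSpace ℝ (Fin d)))
    (hQm : MeasurableSet Q) (hRm : MeasurableSet R) (hSm : MeasurableSet S)
    (hPQ : Disjoint P Q) (hPR : Disjoint P R) (hQR : Disjoint Q R)
    (hPS : Disjoint P S) (hQS : Disjoint Q S) :
    J g S (P ∪ (Q ∪ R)) + J g (P ∪ (Q ∪ S)) R
      ≤ J g (Q ∪ S) (P ∪ R) + J g (P ∪ S) (Q ∪ R) := by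
  have e1 : J g S (P ∪ (Q ∪ R)) = J g S P + (J g S Q + J g S R) := by
    rw [J_union_right g hg (hQm.union hRm) (Set.disjoint_union_right.2 ⟨hPQ, hPR⟩),
      J_union_right g hg hRm hQR]
  have e2 : J g (P ∪ (Q ∪ S)) R = J g P R + (J g Q R + J g S R) := by
    rw [J_union_left g (hQm.union hSm) (Set.disjoint_union_right.2 ⟨hPQ, hPS⟩),
      J_union_left g hSm hQS]
  have e3 : J g (Q ∪ S) (P ∪ R) = (J g Q P + J g Q R) + (J g S P + J g S R) := by
    rw [J_union_left g hSm hQS, J_union_right g hg hRm hPR, J_union_right g hg hRm hPR]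
  have e4 : J g (P ∪ S) (Q ∪ R) = (J g P Q + J g P R) + (J g S Q + J g S R) := by
    rw [J_union_left g hSm hPS, J_union_right g hg hRm hQR, J_union_right g hg hRm hQR]
  rw [e1, e2, e3, e4]
  calc J g S P + (J g S Q + J g S R) + (J g P R + (J g Q R + J g S R))
      ≤ J g S P + (J g S Q + J g S R) + (J g P R + (J g Q R + J g S R))
        + (J g Q P + J g P Q) := le_self_add
    _ = J g Q P + J g Q R + (J g S P + J g S R) + (J g P Q + J g P R + (J g S Q + J g S R)) := by
        ring

end OMWFaux

open OMWFaux

/-- Equivalent formulations of the `K`-outward minimizing condition with an additional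
    functional `𝒜` on the measurable subsets of a container `Ω` of finite measure:
    `P_K(E) + 𝒜(F \ E) ≤ P_K(E ∪ F)` for all measurable `F ⊆ Ω` iff
    `P_K(E ∩ G) + 𝒜(G \ E) ≤ P_K(G)` for all measurable `G ⊆ Ω`. -/
theorem outward_minimizing_with_functional_iff
    {d : ℕ} (K : EuclideanSpace ℝ (Fin d) → ℝ)
    (hK0 : ∀ x, 0 ≤ K x) (hKeven : ∀ x, K (-x) = K x)
    (hKint : Integrable K) (hK1 : ∫ x, K x = 1)
    (Ω : Set (EuclideanSpace ℝ (Fin d))) (hΩ : MeasurableSet Ω)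
    (hΩfin : volume Ω < ⊤)
    (E : Set (EuclideanSpace ℝ (Fin d))) (hE : MeasurableSet E) (hEΩ : E ⊆ Ω)
    (𝒜 : Set (EuclideanSpace ℝ (Fin d)) → ℝ) :
    (∀ F : Set (EuclideanSpace ℝ (Fin d)), MeasurableSet F → F ⊆ Ω →
        PKr K E + 𝒜 (F \ E) ≤ PKr K (E ∪ F)) ↔
    (∀ G : Set (EuclideanSpace ℝ (Fin d)), MeasurableSet G → G ⊆ Ω →
        PKr K (E ∩ G) + 𝒜 (G \ E) ≤ PKr K G) := by
  classical
  have hmK := hKint.1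
  set K' : EuclideanSpace ℝ (Fin d) → ℝ := hmK.mk K with hK'def
  have hmeasK' : StronglyMeasurable K' := hmK.stronglyMeasurable_mk
  have hae : K =ᵐ[volume] K' := hmK.ae_eq_mk
  have hK0' : ∀ᵐ z : EuclideanSpace ℝ (Fin d), 0 ≤ K' z := by
    filter_upwards [hae] with z hz; rw [← hz]; exact hK0 z
  set g : EuclideanSpace ℝ (Fin d) → ℝ≥0∞ := fun z => ENNReal.ofReal (K' z) with hgdef
  have hg : Measurable g := ENNReal.measurable_ofReal.comp hmeasK'.measurable
  have hg1 : ∫⁻ z, g z = 1 := by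
    have h1 : ∫⁻ z, ENNReal.ofReal (K' z) = ∫⁻ z, ENNReal.ofReal (K z) := by
      refine lintegral_congr_ae ?_
      filter_upwards [hae] with z hz; rw [hz]
    rw [hgdef, h1, ← ofReal_integral_eq_lintegral_ofReal hKint (Filter.Eventually.of_forall hK0),
      hK1, ENNReal.ofReal_one]
  -- PKr in terms of J
  have hPKr : ∀ D : Set (EuclideanSpace ℝ (Fin d)), MeasurableSet D →
      PKr K D = (J g Dᶜ D).toReal := by
    intro D hD
    have hconv : ∀ x, conv K D x = (∫⁻ y in D, g (x - y)).toReal := by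
      intro x
      have mp : MeasurePreserving (fun y => x - y)
          (volume : Measure (EuclideanSpace ℝ (Fin d))) volume :=
        Measure.measurePreserving_sub_left volume x
      have step1 : conv K D x = ∫ y in D, K' (x - y) := by
        unfold conv
        have hKK' : ∀ᵐ y : EuclideanSpace ℝ (Fin d), K (x - y) = K' (x - y) :=
          mp.quasiMeasurePreserving.ae hae
        have h2 : ∫ y, K (x - y) * D.indicator (fun _ => (1:ℝ)) y
            = ∫ y, D.indicator (fun y => K' (x - y)) y := by
          refine integral_congr_ae ?_
          filter_upwards [hKK'] with y hy
          by_cases hyD : y ∈ D <;> simp [hyD, hy]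
        rw [h2, integral_indicator hD]
      have hnn : 0 ≤ᵐ[volume.restrict D] fun y => K' (x - y) :=
        ae_restrict_of_ae (mp.quasiMeasurePreserving.ae hK0')
      have hm : AEStronglyMeasurable (fun y => K' (x - y)) (volume.restrict D) :=
        ((hmeasK'.measurable.comp (measurable_const.sub measurable_id)).aestronglyMeasurable).restrict
      rw [step1, integral_eq_lintegral_of_nonneg_ae hnn hm]
    unfold PKr
    calc ∫ x in Dᶜ, conv K D x
        = ∫ x in Dᶜ, (∫⁻ y in D, g (x - y)).toReal :=
          integral_congr_ae (Filter.Eventually.of_forall fun x => hconv x)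
      _ = (J g Dᶜ D).toReal := by
          refine integral_toReal ((meas_inner g hg D).aemeasurable) ?_
          refine ae_of_all _ fun x => ?_
          calc ∫⁻ y in D, g (x - y) ≤ ∫⁻ y, g (x - y) :=
              lintegral_mono' Measure.restrict_le_self le_rfl
            _ = 1 := by
                rw [(Measure.measurePreserving_sub_left volume x).lintegral_comp hg, hg1]
            _ < ⊤ := ENNReal.one_lt_top
  -- submodularity
  have hsub : ∀ G : Set (EuclideanSpace ℝ (Fin d)), MeasurableSet G → G ⊆ Ω →
      PKr K (E ∩ G) + PKr K (E ∪ G) ≤ PKr K E + PKr K G := by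
    intro G hG hGΩ
    have hPQ : Disjoint (E \ G) (G \ E) := by
      rw [Set.disjoint_left]; intro a ha hb; exact hb.2 ha.1
    have hPR : Disjoint (E \ G) (E ∩ G) := by
      rw [Set.disjoint_left]; intro a ha hb; exact ha.2 hb.2
    have hQR : Disjoint (G \ E) (E ∩ G) := by
      rw [Set.disjoint_left]; intro a ha hb; exact ha.2 hb.1
    have hPS : Disjoint (E \ G) (E ∪ G)ᶜ := by
      rw [Set.disjoint_left]; intro a ha hb; exact hb (Or.inl ha.1)
    have hQS : Disjoint (G \ E) (E ∪ G)ᶜ := by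
      rw [Set.disjoint_left]; intro a ha hb; exact hb (Or.inr ha.1)
    have hEeq : E = (E \ G) ∪ (E ∩ G) := by
      ext a; by_cases h : a ∈ G <;> simp [h]
    have hEc : Eᶜ = (G \ E) ∪ (E ∪ G)ᶜ := by
      ext a; by_cases h : a ∈ G <;> by_cases h2 : a ∈ E <;> simp [h, h2]
    have hGeq : G = (G \ E) ∪ (E ∩ G) := by
      ext a; by_cases h : a ∈ E <;> simp [h]
    have hGc : Gᶜ = (E \ G) ∪ (E ∪ G)ᶜ := by
      ext a; by_cases h : a ∈ G <;> by_cases h2 : a ∈ E <;> simp [h, h2]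
    have hUeq : E ∪ G = (E \ G) ∪ ((G \ E) ∪ (E ∩ G)) := by
      ext a; by_cases h : a ∈ E <;> by_cases h2 : a ∈ G <;> simp [h, h2]
    have hIc : (E ∩ G)ᶜ = (E \ G) ∪ ((G \ E) ∪ (E ∪ G)ᶜ) := by
      ext a; by_cases h : a ∈ E <;> by_cases h2 : a ∈ G <;> simp [h, h2]
    have key := submod_core g hg (E \ G) (G \ E) (E ∩ G) (E ∪ G)ᶜ
      (hG.diff hE) (hE.inter hG) (hE.union hG).compl hPQ hPR hQR hPS hQS
    rw [← hUeq, ← hIc, ← hEc, ← hEeq, ← hGc, ← hGeq] at key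
    have hfinE : J g Eᶜ E ≠ ⊤ :=
      (lt_of_le_of_lt (le_trans (J_le g hg hg1 _ _) (measure_mono hEΩ)) hΩfin).ne
    have hfinG : J g Gᶜ G ≠ ⊤ :=
      (lt_of_le_of_lt (le_trans (J_le g hg hg1 _ _) (measure_mono hGΩ)) hΩfin).ne
    rw [hPKr E hE, hPKr G hG, hPKr (E ∩ G) (hE.inter hG), hPKr (E ∪ G) (hE.union hG)]
    rw [← ENNReal.toReal_add (by
        exact (lt_of_le_of_lt (le_trans (J_le g hg hg1 _ _)
          (measure_mono (fun a ha => hEΩ ha.1))) hΩfin).ne)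
      (by
        exact (lt_of_le_of_lt (le_trans (J_le g hg hg1 _ _)
          (measure_mono (Set.union_subset hEΩ hGΩ))) hΩfin).ne),
      ← ENNReal.toReal_add hfinE hfinG]
    refine ENNReal.toReal_mono (ENNReal.add_ne_top.2 ⟨hfinE, hfinG⟩) ?_
    calc J g (E ∩ G)ᶜ (E ∩ G) + J g (E ∪ G)ᶜ (E ∪ G)
        = J g (E ∪ G)ᶜ (E ∪ G) + J g (E ∩ G)ᶜ (E ∩ G) := add_comm _ _
      _ ≤ J g Eᶜ E + J g Gᶜ G := key
  constructor
  · intro h G hG hGΩ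
    have h1 := h G hG hGΩ
    have h2 := hsub G hG hGΩ
    linarith
  · intro h F hF hFΩ
    have h1 := h (E ∪ F) (hE.union hF) (Set.union_subset hEΩ hFΩ)
    rw [Set.union_diff_left, Set.inter_eq_left.2 Set.subset_union_left] at h1
    exact h1
end

section
/- (Monotone speed with constant drift) Let K : ℝ^d → ℝ be non-negative and integrable, let c ∈ ℝ, and for a measurable set E define the drifted thresholding T_{K,c} E := {x ∈ ℝ^d : (K ∗ χ_E)(x) > 1/2 − c}. Let E₀ ⊆ ℝ^d be measurable and set E₁ := T_{K,c} E₀, E₂ := T_{K,c} E₁. If E₁ ⊆ E₀, then E₂ ⊆ E₁ and inf{ |x − y| : x ∈ E₂, y ∈ frontier(E₁) } ≥ inf{ |x − y| : x ∈ E₁, y ∈ frontier(E₀) } (infimum over the empty set is +∞). -/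
/-!
Since `K ≥ 0`, thresholding is monotone and respects translations: if `A + v ⊆ B` then
`T A + v ⊆ T B`. Let `δ` be the distance from `E₁` to `∂E₀`. For `z ∈ E₁ ⊆ E₀` and `‖v‖ < δ`
the segment from `z` to `z + v` cannot cross `∂E₀`, so `E₁ + v ⊆ E₀`, hence `E₂ + v ⊆ E₁`.
Thus the `δ`-ball around every point of `E₂` lies in `E₁`, keeping it at distance `≥ δ`
from `∂E₁`.
-/

open MeasureTheory
open scoped ENNReal

/-- The thresholding operator with constant drift `c`:
    `T_{K,c} E = {x | (K ∗ χ_E)(x) > 1/2 − c}`. -/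
def threshDrift {d : ℕ} (K : EuclideanSpace ℝ (Fin d) → ℝ) (c : ℝ)
    (E : Set (EuclideanSpace ℝ (Fin d))) : Set (EuclideanSpace ℝ (Fin d)) :=
  {x | 1 / 2 - c < conv K E x}

open Set Metric

theorem IsPreconnected.subset_of_disjoint_frontier {X : Type*} [TopologicalSpace X]
    {s t : Set X} (hs : IsPreconnected s) (hst : (s ∩ t).Nonempty)
    (hfr : Disjoint s (frontier t)) : s ⊆ t := by
  have hcover : s ⊆ interior t ∪ interior tᶜ :=
    hfr.subset_compl_right.trans compl_frontier_eq_union_interior.subset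
  obtain ⟨a, has, hat⟩ := hst
  have hmeet : (s ∩ interior t).Nonempty :=
    ⟨a, has, (hcover has).resolve_right fun h => interior_subset h hat⟩
  exact (hs.subset_left_of_subset_union isOpen_interior isOpen_interior
    (disjoint_compl_right.mono interior_subset interior_subset) hcover hmeet).trans interior_subset

theorem le_infEDist_frontier_of_eball_subset {α : Type*} [PseudoEMetricSpace α] {s : Set α}
    {x : α} {r : ℝ≥0∞} (h : eball x r ⊆ s) : r ≤ infEDist x (frontier s) :=
  le_infEDist.2 fun _y hy => not_lt.1 fun hlt =>
    hy.2 (interior_maximal h isOpen_eball (mem_eball'.2 hlt))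

theorem eball_subset_of_le_infEDist_frontier {E : Type*} [NormedAddCommGroup E]
    [NormedSpace ℝ E] {s : Set E} {x : E} (hx : x ∈ s) {r : ℝ≥0∞}
    (hr : r ≤ infEDist x (frontier s)) : eball x r ⊆ s := by
  rcases eq_zero_or_pos r with rfl | hr0
  · simp
  refine (convex_eball x r).isPreconnected.subset_of_disjoint_frontier
    ⟨x, mem_eball_self hr0, hx⟩ (disjoint_left.2 fun y hy hfr => ?_)
  exact (mem_eball'.1 hy).not_ge (hr.trans (infEDist_le_edist_of_mem hfr))

section Thresholding

variable {d : ℕ} {K : EuclideanSpace ℝ (Fin d) → ℝ}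

theorem integrable_conv_integrand (hK : Integrable K) {B : Set (EuclideanSpace ℝ (Fin d))}
    (hB : MeasurableSet B) (x : EuclideanSpace ℝ (Fin d)) :
    Integrable (fun y => K (x - y) * B.indicator (fun _ => (1 : ℝ)) y) := by
  refine ((hK.comp_sub_left x).indicator hB).congr (.of_forall fun y => ?_)
  by_cases hy : y ∈ B <;> simp [hy]

theorem conv_le_conv_add_of_mapsTo (hK0 : ∀ x, 0 ≤ K x) (hK : Integrable K)
    {A B : Set (EuclideanSpace ℝ (Fin d))} (hB : MeasurableSet B)
    {v : EuclideanSpace ℝ (Fin d)} (hAB : MapsTo (· + v) A B) (x : EuclideanSpace ℝ (Fin d)) :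
    conv K A x ≤ conv K B (x + v) := by
  have hshift : conv K B (x + v) = ∫ z, K (x - z) * B.indicator (fun _ => (1 : ℝ)) (z + v) := by
    rw [conv, ← integral_add_right_eq_self _ v]
    simp only [add_sub_add_right_eq_sub]
  rw [hshift]
  refine integral_mono_of_nonneg (.of_forall fun y => ?_) ?_ (.of_forall fun z => ?_)
  · exact mul_nonneg (hK0 _) (indicator_nonneg (fun _ _ => zero_le_one) y)
  · simpa only [add_sub_add_right_eq_sub] using
      (integrable_conv_integrand hK hB (x + v)).comp_add_right v
  · by_cases hz : z ∈ A
    · simp [indicator_of_mem hz, indicator_of_mem (hAB hz)]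
    · simpa [indicator_of_notMem hz] using
        mul_nonneg (hK0 _) (indicator_nonneg (fun _ _ => zero_le_one) _)

theorem threshDrift_mapsTo_add (hK0 : ∀ x, 0 ≤ K x) (hK : Integrable K) (c : ℝ)
    {A B : Set (EuclideanSpace ℝ (Fin d))} (hB : MeasurableSet B)
    {v : EuclideanSpace ℝ (Fin d)} (hAB : MapsTo (· + v) A B) :
    MapsTo (· + v) (threshDrift K c A) (threshDrift K c B) := fun x hx =>
  hx.trans_le (conv_le_conv_add_of_mapsTo hK0 hK hB hAB x)

theorem threshDrift_mono (hK0 : ∀ x, 0 ≤ K x) (hK : Integrable K) (c : ℝ)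
    {A B : Set (EuclideanSpace ℝ (Fin d))} (hB : MeasurableSet B) (hAB : A ⊆ B) :
    threshDrift K c A ⊆ threshDrift K c B :=
  fun x hx => by
    simpa using threshDrift_mapsTo_add hK0 hK c hB (v := 0) (fun z hz => by simpa using hAB hz) hx

end Thresholding

/-- Monotone speed of contracting sets for thresholding with constant drift:
    if `E₁ = T_{K,c} E₀ ⊆ E₀`, then `E₂ = T_{K,c} E₁ ⊆ E₁` and
    `dist(E₂, ∂E₁) ≥ dist(E₁, ∂E₀)`, where distances are infima in `[0,∞]` (the infimum
    over the empty set being `+∞`). -/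
theorem monotone_speed_with_drift
    {d : ℕ} (K : EuclideanSpace ℝ (Fin d) → ℝ)
    (hK0 : ∀ x, 0 ≤ K x) (hKint : Integrable K) (c : ℝ)
    (E₀ : Set (EuclideanSpace ℝ (Fin d))) (hE₀ : MeasurableSet E₀)
    (hcontract : threshDrift K c E₀ ⊆ E₀) :
    threshDrift K c (threshDrift K c E₀) ⊆ threshDrift K c E₀ ∧
    (⨅ x ∈ threshDrift K c E₀, ⨅ y ∈ frontier E₀, edist x y) ≤
      ⨅ x ∈ threshDrift K c (threshDrift K c E₀),
        ⨅ y ∈ frontier (threshDrift K c E₀), edist x y := by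
  set E₁ := threshDrift K c E₀
  refine ⟨threshDrift_mono hK0 hKint c hE₀ hcontract, ?_⟩
  set δ := ⨅ x ∈ E₁, infEDist x (frontier E₀)
  have hshift (v : EuclideanSpace ℝ (Fin d)) (hv : ‖v‖ₑ < δ) : MapsTo (· + v) E₁ E₀ := fun z hz =>
    eball_subset_of_le_infEDist_frontier (hcontract hz)
      (biInf_le (fun z => infEDist z (frontier E₀)) hz) (by simpa [edist_eq_enorm_sub] using hv)
  refine le_iInf₂ fun x hx => le_infEDist_frontier_of_eball_subset fun w hw => ?_
  simpa using threshDrift_mapsTo_add hK0 hKint c hE₀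
    (hshift (w - x) (by rwa [mem_eball, edist_eq_enorm_sub] at hw)) hx
end

section
/- (Large-scale Lipschitz bound for the arrival time function) Let h > 0, w > 0, and let (E_k)_{k ≥ 0} be a sequence of measurable subsets of ℝ^d such that E_{k+1} ⊆ E_k for all k, such that for every k, every x ∈ E_{k+1} and every y ∈ frontier(E_k) one has |x − y| ≥ wh, and such that E_k = ∅ for all sufficiently large k. Define the arrival time function u_h : ℝ^d → ℝ by u_h := h Σ_{k ≥ 0} χ_{E_k}. Then for all x, x̄ ∈ E₀ one has |u_h(x) − u_h(x̄)| ≤ (1/w) |x − x̄| + h. -/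
open MeasureTheory

/-- Key geometric lemma: if `x` is in the closure of `E (b + m)` and `y ∉ E b`, then
`dist x y ≥ w * h * m`. -/
lemma arrival_time_key {d : ℕ} (h w : ℝ) (hh : 0 < h) (hw : 0 < w)
    (E : ℕ → Set (EuclideanSpace ℝ (Fin d)))
    (hmono : ∀ k, E (k + 1) ⊆ E k)
    (hdist : ∀ k, ∀ x ∈ E (k + 1), ∀ y ∈ frontier (E k), w * h ≤ dist x y) :
    ∀ m b : ℕ, ∀ x ∈ closure (E (b + m)), ∀ y, y ∉ E b → w * h * m ≤ dist x y := by
  have hanti : Antitone E := antitone_nat_of_succ_le hmono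
  intro m
  induction m with
  | zero =>
    intro b x hx y hy
    simpa using dist_nonneg (x := x) (y := y)
  | succ m ih =>
    intro b x hx y hy
    have key : ∀ x₀ ∈ E (b + (m + 1)), w * h * (m + 1) ≤ dist x₀ y := by
      intro x₀ hx₀
      have hx₀' : x₀ ∈ E ((b + m) + 1) := by
        have : b + (m + 1) = (b + m) + 1 := by omega
        rwa [this] at hx₀
      have hwh : 0 < w * h := by positivity
      have hnf : x₀ ∉ frontier (E (b + m)) := by
        intro hf
        have := hdist (b + m) x₀ hx₀' x₀ hf
        simp only [dist_self] at this
        linarith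
      have hxE : x₀ ∈ E (b + m) := hmono _ hx₀'
      have hint : x₀ ∈ interior (E (b + m)) := by
        have hc : x₀ ∈ closure (E (b + m)) := subset_closure hxE
        rw [closure_eq_interior_union_frontier] at hc
        exact hc.resolve_right hnf
      have hy' : y ∉ E (b + m) := fun hy' => hy (hanti (Nat.le_add_right b m) hy')
      -- the segment from x₀ to y must cross the frontier of E (b + m)
      have hz : (segment ℝ x₀ y ∩ frontier (E (b + m))).Nonempty := by
        by_contra hcon
        rw [Set.not_nonempty_iff_eq_empty] at hcon
        have hseg : IsPreconnected (segment ℝ x₀ y) :=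
          (convex_segment x₀ y).isPreconnected
        have hsub : segment ℝ x₀ y ⊆ interior (E (b + m)) ∪ (closure (E (b + m)))ᶜ := by
          intro z hzseg
          have hznf : z ∉ frontier (E (b + m)) := fun hzf =>
            (Set.eq_empty_iff_forall_notMem.1 hcon z) ⟨hzseg, hzf⟩
          by_cases hcase : z ∈ closure (E (b + m))
          · rw [closure_eq_interior_union_frontier] at hcase
            exact Or.inl (hcase.resolve_right hznf)
          · exact Or.inr hcase
        have hyc : y ∈ (closure (E (b + m)))ᶜ := by
          intro hycl
          have hynf : y ∉ frontier (E (b + m)) := by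
            intro hyf
            exact (Set.eq_empty_iff_forall_notMem.1 hcon y)
              ⟨right_mem_segment ℝ x₀ y, hyf⟩
          rw [closure_eq_interior_union_frontier] at hycl
          exact hy' (interior_subset (hycl.resolve_right hynf))
        have hne := hseg (interior (E (b + m))) ((closure (E (b + m)))ᶜ)
          isOpen_interior (isClosed_closure.isOpen_compl) hsub
          ⟨x₀, left_mem_segment ℝ x₀ y, hint⟩ ⟨y, right_mem_segment ℝ x₀ y, hyc⟩
        obtain ⟨z, _, hz1, hz2⟩ := hne
        exact hz2 (interior_subset_closure hz1)
      obtain ⟨z, hzseg, hzf⟩ := hz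
      have h1 : w * h ≤ dist x₀ z := hdist (b + m) x₀ hx₀' z hzf
      have h2 : w * h * m ≤ dist z y :=
        ih b z (frontier_subset_closure hzf) y hy
      have h3 : dist x₀ z + dist z y = dist x₀ y := dist_add_dist_of_mem_segment hzseg
      push_cast
      linarith
    -- extend from `E (b + (m+1))` to its closure
    refine le_of_forall_pos_le_add fun ε hε => ?_
    obtain ⟨x₀, hx₀, hxx₀⟩ := Metric.mem_closure_iff.1 hx ε hε
    have := key x₀ hx₀
    have htri : dist x₀ y ≤ dist x₀ x + dist x y := dist_triangle x₀ x y
    rw [dist_comm x₀ x] at htri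
    push_cast
    push_cast at this
    linarith

lemma arrival_time_tsum {d : ℕ} (E : ℕ → Set (EuclideanSpace ℝ (Fin d)))
    (x : EuclideanSpace ℝ (Fin d)) (n : ℕ) (hmem : ∀ k, x ∈ E k ↔ k ≤ n) :
    (∑' k : ℕ, (E k).indicator (fun _ => (1 : ℝ)) x) = n + 1 := by
  classical
  rw [tsum_eq_sum (s := Finset.range (n + 1)) (f := fun k => (E k).indicator (fun _ => (1 : ℝ)) x)
    (fun b hb => by
      simp only [Finset.mem_range, not_lt] at hb
      have : x ∉ E b := fun hxb => absurd ((hmem b).1 hxb) (by omega)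
      exact Set.indicator_of_notMem this _)]
  have : ∀ b ∈ Finset.range (n + 1), (E b).indicator (fun _ => (1 : ℝ)) x = 1 := by
    intro b hb
    simp only [Finset.mem_range] at hb
    exact Set.indicator_of_mem ((hmem b).2 (by omega)) _
  rw [Finset.sum_congr rfl this]
  simp

/-- Large-scale Lipschitz bound for the arrival time function
    `u_h = h Σ_k χ_{E_k}` of a uniformly contracting decreasing family of sets:
    `|u_h(x) − u_h(x̄)| ≤ (1/w)|x − x̄| + h` for `x, x̄ ∈ E₀`. -/
theorem arrival_time_large_scale_lipschitz
    {d : ℕ} (h w : ℝ) (hh : 0 < h) (hw : 0 < w)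
    (E : ℕ → Set (EuclideanSpace ℝ (Fin d)))
    (hmeas : ∀ k, MeasurableSet (E k))
    (hmono : ∀ k, E (k + 1) ⊆ E k)
    (hdist : ∀ k, ∀ x ∈ E (k + 1), ∀ y ∈ frontier (E k), w * h ≤ dist x y)
    (hext : ∃ N : ℕ, ∀ n ≥ N, E n = (∅ : Set (EuclideanSpace ℝ (Fin d)))) :
    ∀ x ∈ E 0, ∀ x' ∈ E 0,
      |(h * ∑' k : ℕ, (E k).indicator (fun _ => (1 : ℝ)) x) -
          (h * ∑' k : ℕ, (E k).indicator (fun _ => (1 : ℝ)) x')| ≤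
        (1 / w) * dist x x' + h := by
  classical
  obtain ⟨N, hN⟩ := hext
  have hanti : Antitone E := antitone_nat_of_succ_le hmono
  -- membership characterization via findGreatest
  have hchar : ∀ x ∈ E 0, ∀ k, x ∈ E k ↔ k ≤ Nat.findGreatest (fun j => x ∈ E j) N := by
    intro x hx k
    constructor
    · intro hk
      have hkN : k ≤ N := by
        by_contra hcon
        rw [hN k (le_of_not_ge hcon)] at hk
        exact hk
      exact Nat.le_findGreatest hkN hk
    · intro hk
      have hspec : x ∈ E (Nat.findGreatest (fun j => x ∈ E j) N) :=
        Nat.findGreatest_spec (P := fun j => x ∈ E j) (Nat.zero_le N) hx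
      exact hanti hk hspec
  -- key inequality step
  have step : ∀ x ∈ E 0, ∀ x' ∈ E 0,
      (Nat.findGreatest (fun j => x' ∈ E j) N : ℝ) ≤ Nat.findGreatest (fun j => x ∈ E j) N →
      h * (Nat.findGreatest (fun j => x ∈ E j) N + 1) -
        h * (Nat.findGreatest (fun j => x' ∈ E j) N + 1) ≤ (1 / w) * dist x x' + h := by
    intro x hx x' hx' hle
    set nx := Nat.findGreatest (fun j => x ∈ E j) N with hnx
    set nx' := Nat.findGreatest (fun j => x' ∈ E j) N with hnx'
    have hle' : nx' ≤ nx := by exact_mod_cast hle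
    rcases Nat.lt_or_ge nx' nx with hlt | hge
    · -- nx' + 1 ≤ nx
      set m := nx - (nx' + 1) with hm
      have hxm : x ∈ E ((nx' + 1) + m) := by
        have : (nx' + 1) + m = nx := by omega
        rw [this]
        exact (hchar x hx nx).2 le_rfl
      have hy : x' ∉ E (nx' + 1) := by
        intro hcon
        have := (hchar x' hx' (nx' + 1)).1 hcon
        omega
      have hkey := arrival_time_key h w hh hw E hmono hdist m (nx' + 1) x
        (subset_closure hxm) x' hy
      have hmcast : (m : ℝ) = (nx : ℝ) - (nx' : ℝ) - 1 := by
        rw [hm]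
        push_cast [Nat.cast_sub (by omega : nx' + 1 ≤ nx)]
        ring
      have hdivw : h * ((nx : ℝ) - nx' - 1) ≤ (1 / w) * dist x x' := by
        rw [one_div, mul_comm w⁻¹ (dist x x'), ← div_eq_mul_inv, le_div_iff₀ hw]
        calc h * ((nx : ℝ) - nx' - 1) * w = w * h * m := by rw [hmcast]; ring
          _ ≤ dist x x' := hkey
      linarith
    · have : nx = nx' := le_antisymm hge hle'
      rw [this]
      have : (0 : ℝ) ≤ (1 / w) * dist x x' := by positivity
      linarith
  intro x hx x' hx'
  rw [arrival_time_tsum E x _ (hchar x hx), arrival_time_tsum E x' _ (hchar x' hx')]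
  rw [abs_sub_le_iff]
  constructor
  · rcases le_total (Nat.findGreatest (fun j => x' ∈ E j) N : ℝ)
      (Nat.findGreatest (fun j => x ∈ E j) N : ℝ) with hle | hle
    · exact step x hx x' hx' hle
    · have h0 : (0 : ℝ) ≤ (1 / w) * dist x x' := by positivity
      have hhm : h * ((Nat.findGreatest (fun j => x ∈ E j) N : ℝ) + 1) ≤
          h * ((Nat.findGreatest (fun j => x' ∈ E j) N : ℝ) + 1) := by
        apply mul_le_mul_of_nonneg_left (by linarith) hh.le
      linarith
  · rcases le_total (Nat.findGreatest (fun j => x ∈ E j) N : ℝ)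
      (Nat.findGreatest (fun j => x' ∈ E j) N : ℝ) with hle | hle
    · have := step x' hx' x hx hle
      rwa [dist_comm x' x] at this
    · have h0 : (0 : ℝ) ≤ (1 / w) * dist x x' := by positivity
      have hhm : h * ((Nat.findGreatest (fun j => x' ∈ E j) N : ℝ) + 1) ≤
          h * ((Nat.findGreatest (fun j => x ∈ E j) N : ℝ) + 1) := by
        apply mul_le_mul_of_nonneg_left (by linarith) hh.le
      linarith
end
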